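/- arXiv:math/0005250 — 3 statements merged into one kernel-verified Lean document; each statement's English description precedes it below -/
import Mathlib

section
/- For finite complex measures μ, ν on ℝ², the maps φ_μ defined on B(H) by φ_μ(W_z) = μ̂(z) W_z (for an irreducible Weyl system) satisfy the composition law φ_μ ∘ φ_ν = φ_{μ*ν}, where μ*ν is the convolution of measures. -/
open MeasureTheory Complex Filter
open scoped ComplexOrder

noncomputable section

/-- The symplectic form `ω((x,y),(x',y')) = (x'y − xy')/2` on `ℝ²`. -/
def symp (z w : ℝ × ℝ) : ℝ := (w.1 * z.2 - z.1 * w.2) / 2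

variable (H : Type) [NormedAddCommGroup H] [InnerProductSpace ℂ H] [CompleteSpace H]

/-- A Weyl system: a strongly continuous family of unitaries satisfying the Weyl relation. -/
structure WeylSystem where
  W : ℝ × ℝ → H →L[ℂ] H
  unitary_mem : ∀ z, W z ∈ unitary (H →L[ℂ] H)
  strong_cont : ∀ f : H, Continuous fun z => W z f
  weyl : ∀ z₁ z₂, W z₁ * W z₂ = Complex.exp (Complex.I * (symp z₁ z₂ : ℂ)) • W (z₁ + z₂)

variable {H}

/-- Irreducibility: any operator commuting with all the `W z` is a scalar. -/
def WeylSystem.Irreducible (S : WeylSystem H) : Prop :=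
  ∀ T : H →L[ℂ] H, (∀ z, T * S.W z = S.W z * T) → ∃ c : ℂ, T = c • (1 : H →L[ℂ] H)

/-- Conjugation `A ↦ W_{ζ/√2} A W_{ζ/√2}*`. -/
def WeylSystem.conj (S : WeylSystem H) (ζ : ℝ × ℝ) (A : H →L[ℂ] H) : H →L[ℂ] H :=
  S.W ((Real.sqrt 2)⁻¹ • ζ) * A * star (S.W ((Real.sqrt 2)⁻¹ • ζ))

/-- Normal (weak-* continuous) linear functionals on `B(H)`. -/
def IsNormalFunctional (ρ : (H →L[ℂ] H) → ℂ) : Prop :=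
  ∃ ξ η : ℕ → H, Summable (fun n => ‖ξ n‖ * ‖η n‖) ∧
    ∀ A : H →L[ℂ] H, ρ A = ∑' n, @inner ℂ _ _ (A (ξ n)) (η n)

/-- Normal states on `B(H)`. -/
def IsNormalState (ρ : (H →L[ℂ] H) → ℂ) : Prop :=
  IsNormalFunctional ρ ∧ (∀ A : H →L[ℂ] H, 0 ≤ ρ (star A * A)) ∧ ρ 1 = 1

/-- The norm of a (bounded) linear functional on `B(H)`. -/
def funcNorm (ρ : (H →L[ℂ] H) → ℂ) : ℝ :=
  ⨆ A : {A : H →L[ℂ] H // ‖A‖ ≤ 1}, ‖ρ A.1‖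

/-- The Gaussian probability measure `μ_t` on `ℝ²`, with density `(πt)⁻¹ e^{−(x²+y²)/(4t)}`,
whose symplectic Fourier transform is `e^{−t|z|²}`. -/
def gaussMeasure (t : ℝ) : Measure (ℝ × ℝ) :=
  volume.withDensity fun p => ENNReal.ofReal ((Real.pi * t)⁻¹ * Real.exp (-(p.1 ^ 2 + p.2 ^ 2) / (4 * t)))

/-- `Φ` is the CCR heat flow semigroup: `Φ 0` is the identity and for `t > 0`, `Φ t` is given by
the weak integral `Φ t A = ∫ W_{ζ/√2} A W_{ζ/√2}* dμ_t(ζ)` against the Gaussian measure. -/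
def IsHeatFlow (S : WeylSystem H) (Φ : ℝ → (H →L[ℂ] H) → (H →L[ℂ] H)) : Prop :=
  Φ 0 = id ∧ ∀ t > 0, ∀ (A : H →L[ℂ] H) (ξ η : H),
    @inner ℂ _ _ ((Φ t A) ξ) η = ∫ ζ, @inner ℂ _ _ ((S.conj ζ A) ξ) η ∂(gaussMeasure t)
lemma WeylSystem.conj_conj (S : WeylSystem H) (ζ ζ' : ℝ × ℝ) (A : H →L[ℂ] H) :
    S.conj ζ (S.conj ζ' A) = S.conj (ζ + ζ') A := by
  set a := (Real.sqrt 2)⁻¹ • ζ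
  set b := (Real.sqrt 2)⁻¹ • ζ'
  have hab : (Real.sqrt 2)⁻¹ • (ζ + ζ') = a + b := smul_add _ _ _
  set c : ℂ := Complex.exp (Complex.I * (symp a b : ℂ)) with hc
  have hW : S.W a * S.W b = c • S.W (a + b) := S.weyl a b
  have hcc : c * (starRingEnd ℂ) c = 1 := by
    rw [hc, ← Complex.exp_conj, ← Complex.exp_add]
    simp [Complex.ext_iff, Complex.exp_re, Complex.exp_im]
  have hstar : star (S.W b) * star (S.W a) = (starRingEnd ℂ) c • star (S.W (a + b)) := by
    rw [← star_mul, hW, star_smul]; rfl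
  unfold WeylSystem.conj
  rw [hab]
  calc S.W a * (S.W b * A * star (S.W b)) * star (S.W a)
      = (S.W a * S.W b) * A * (star (S.W b) * star (S.W a)) := by noncomm_ring
    _ = (c • S.W (a + b)) * A * ((starRingEnd ℂ) c • star (S.W (a + b))) := by
        rw [hW, hstar]
    _ = (c * (starRingEnd ℂ) c) • (S.W (a + b) * A * star (S.W (a + b))) := by
        simp [smul_smul, mul_comm]
    _ = S.W (a + b) * A * star (S.W (a + b)) := by rw [hcc, one_smul]

/-- Composition law `φ_μ ∘ φ_ν = φ_{μ*ν}`: if `Φ`, `Ψ` are the maps on `B(H)` given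
by the weak integrals against the finite complex measures `μ = w dμ₀` and `ν = v dν₀`
(so `Φ(W_z) = μ̂(z)W_z`, `Ψ(W_z) = ν̂(z)W_z` for the irreducible Weyl system), and `Θ` is the map
given by the weak integral against the convolution `μ*ν`, then `Φ ∘ Ψ = Θ`. -/
theorem weyl_weak_integral_composition (S : WeylSystem H) (hS : S.Irreducible)
    (μ₀ ν₀ : Measure (ℝ × ℝ)) [IsFiniteMeasure μ₀] [IsFiniteMeasure ν₀]
    (w v : ℝ × ℝ → ℂ) (hw : Measurable w) (hv : Measurable v)
    (hw1 : ∀ᵐ ζ ∂μ₀, ‖w ζ‖ = 1) (hv1 : ∀ᵐ ζ ∂ν₀, ‖v ζ‖ = 1)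
    (Φ Ψ Θ : (H →L[ℂ] H) → (H →L[ℂ] H))
    (hΦ : ∀ (A : H →L[ℂ] H) (ξ η : H),
      @inner ℂ _ _ ((Φ A) ξ) η = ∫ ζ, w ζ * @inner ℂ _ _ ((S.conj ζ A) ξ) η ∂μ₀)
    (hΨ : ∀ (A : H →L[ℂ] H) (ξ η : H),
      @inner ℂ _ _ ((Ψ A) ξ) η = ∫ ζ, v ζ * @inner ℂ _ _ ((S.conj ζ A) ξ) η ∂ν₀)
    (hΘ : ∀ (A : H →L[ℂ] H) (ξ η : H),
      @inner ℂ _ _ ((Θ A) ξ) η =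
        ∫ ζ, ∫ ζ', w ζ * v ζ' * @inner ℂ _ _ ((S.conj (ζ + ζ') A) ξ) η ∂ν₀ ∂μ₀) :
    ∀ A : H →L[ℂ] H, Φ (Ψ A) = Θ A := by
  have key : ∀ (B : H →L[ℂ] H) (ζ : ℝ × ℝ) (ξ η : H),
      @inner ℂ _ _ ((S.conj ζ B) ξ) η =
        @inner ℂ _ _ (B ((star (S.W ((Real.sqrt 2)⁻¹ • ζ))) ξ))
          ((star (S.W ((Real.sqrt 2)⁻¹ • ζ))) η) := by
    intro B ζ ξ η
    simp only [WeylSystem.conj, ContinuousLinearMap.mul_apply,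
      ContinuousLinearMap.star_eq_adjoint]
    rw [← ContinuousLinearMap.adjoint_inner_right]
  intro A
  ext ξ
  apply ext_inner_right ℂ
  intro η
  rw [hΦ, hΘ]
  refine integral_congr_ae (Filter.Eventually.of_forall fun ζ => ?_)
  dsimp only
  rw [key (Ψ A) ζ ξ η, hΨ]
  rw [← MeasureTheory.integral_const_mul]
  refine integral_congr_ae (Filter.Eventually.of_forall fun ζ' => ?_)
  dsimp only
  rw [← key (S.conj ζ' A) ζ ξ η, S.conj_conj, mul_assoc]
end
end

section
/- Riemann–Lebesgue lemma for the CCR transform: for every trace-class operator A on L²(ℝ), the function Â(z) = trace(A W_z) tends to 0 as |z| → ∞. -/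
open MeasureTheory Complex Filter
open scoped ComplexOrder

noncomputable section

variable (H : Type) [NormedAddCommGroup H] [InnerProductSpace ℂ H] [CompleteSpace H]

variable {H}

/-!
`Â` is a sum, dominated by `∑ ‖ξ n‖ ‖η n‖`, of matrix coefficients `z ↦ ⟪f, W_z g⟫`, so it suffices
that each of these vanishes at infinity. As the `W_z` are contractions, this is a closed condition
on `(f, g)`, so it is enough to check it for `f, g` vanishing outside a bounded interval. The Weyl
relation gives `|⟪f, W_(x,y) g⟫| = |⟪W_(x,0)* f, W_(0,y) g⟫|`. This vanishes for large `|y|` by the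
support condition; for fixed `y` it tends to `0` as `|x| → ∞` by the classical Riemann–Lebesgue
lemma; and it is equicontinuous in `y`, since `y ↦ W_(0,y) g` is continuous and `‖W_(x,0)* f‖ = ‖f‖`.
Equicontinuity turns the pointwise decay in `x` into decay uniform over the compact set of
relevant `y`.
-/

open Topology
open scoped InnerProductSpace NNReal ENNReal

theorem EquicontinuousOn.tendstoUniformlyOn_of_tendsto {ι X α : Type*} [TopologicalSpace X]
    [UniformSpace α] {F : ι → X → α} {f : X → α} {l : Filter ι} {K : Set X}
    (hF : EquicontinuousOn F K) (hK : IsCompact K) (h : ∀ x ∈ K, Tendsto (F · x) l (𝓝 (f x))) :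
    TendstoUniformlyOn F f l K := by
  have := (EquicontinuousOn.tendsto_uniformOnFun_iff_pi' (𝔖 := {K}) (by simpa using hK)
    (by simpa using hF) l f).2 (by simpa [tendsto_pi_nhds] using fun x hx => h x hx)
  rw [UniformOnFun.tendsto_iff_tendstoUniformlyOn] at this
  exact this K rfl

theorem tendsto_cocompact_prod_of_equicontinuousOn {X Y α : Type*} [TopologicalSpace X]
    [TopologicalSpace Y] [UniformSpace α] {F : X → Y → α} {a : α} {K : Set Y} (hK : IsCompact K)
    (hF : EquicontinuousOn F K) (h : ∀ y ∈ K, Tendsto (F · y) (cocompact X) (𝓝 a))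
    (hzero : ∀ x, ∀ y ∉ K, F x y = a) :
    Tendsto (Function.uncurry F) (cocompact (X × Y)) (𝓝 a) := by
  have hunif : TendstoUniformly F (fun _ => a) (cocompact X) := by
    intro u hu
    filter_upwards [hF.tendstoUniformlyOn_of_tendsto hK h u hu] with x hx y
    by_cases hy : y ∈ K
    · exact hx y hy
    · rw [hzero x y hy]
      exact refl_mem_uniformity hu
  rw [← coprod_cocompact, Filter.coprod, tendsto_sup]
  constructor
  · rw [tendstoUniformly_iff_tendsto, prod_top] at hunif
    rw [nhds_eq_comap_uniformity]
    exact tendsto_comap_iff.2 hunif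
  · refine tendsto_const_nhds.congr' ?_
    filter_upwards [preimage_mem_comap hK.compl_mem_cocompact] with z hz
    exact (hzero z.1 z.2 hz).symm

theorem equicontinuous_inner_of_norm_le {ι Y 𝕜 E : Type*} [TopologicalSpace Y] [RCLike 𝕜]
    [NormedAddCommGroup E] [InnerProductSpace 𝕜 E] {u : ι → E} {C : ℝ≥0} (hu : ∀ i, ‖u i‖ ≤ C)
    {v : Y → E} (hv : Continuous v) : Equicontinuous fun i y => ⟪u i, v y⟫_𝕜 := by
  have hlip : UniformEquicontinuous fun i (w : E) => ⟪u i, w⟫_𝕜 :=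
    LipschitzWith.uniformEquicontinuous _ C fun i =>
      (innerSL 𝕜 (u i)).lipschitzWith_of_opNorm_le ((innerSL_apply_norm 𝕜 (u i)).trans_le (hu i))
  exact equicontinuous_iff_continuous.2
    ((equicontinuous_iff_continuous.1 hlip.equicontinuous).comp hv)

theorem tendsto_inner_apply_of_dense {Z 𝕜 E : Type*} [RCLike 𝕜] [NormedAddCommGroup E]
    [InnerProductSpace 𝕜 E] {T : Z → E →L[𝕜] E} {C : ℝ} (hT : ∀ z, ‖T z‖ ≤ C) {l : Filter Z}
    {D : Set E} (hD : Dense D)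
    (h : ∀ f ∈ D, ∀ g ∈ D, Tendsto (fun z => ⟪f, T z g⟫_𝕜) l (𝓝 0)) (f g : E) :
    Tendsto (fun z => ⟪f, T z g⟫_𝕜) l (𝓝 0) := by
  set b : E × E → ℝ := fun q => ‖f - q.1‖ * (C * ‖g‖) + ‖q.1‖ * (C * ‖g - q.2‖)
  have hb : ∀ q : E × E, ∀ z, dist ⟪f, T z g⟫_𝕜 ⟪q.1, T z q.2⟫_𝕜 ≤ b q := by
    intro q z
    have hsplit : ⟪f, T z g⟫_𝕜 - ⟪q.1, T z q.2⟫_𝕜 =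
        ⟪f - q.1, T z g⟫_𝕜 + ⟪q.1, T z (g - q.2)⟫_𝕜 := by
      rw [map_sub, inner_sub_left, inner_sub_right]
      ring
    rw [dist_eq_norm, hsplit]
    calc ‖⟪f - q.1, T z g⟫_𝕜 + ⟪q.1, T z (g - q.2)⟫_𝕜‖
        ≤ ‖f - q.1‖ * ‖T z g‖ + ‖q.1‖ * ‖T z (g - q.2)‖ :=
          (norm_add_le _ _).trans (add_le_add (norm_inner_le_norm _ _) (norm_inner_le_norm _ _))
      _ ≤ ‖f - q.1‖ * (C * ‖g‖) + ‖q.1‖ * (C * ‖g - q.2‖) := by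
        gcongr <;> exact (T z).le_of_opNorm_le (hT z) _
  have hunif : TendstoUniformly (fun (q : E × E) z => ⟪q.1, T z q.2⟫_𝕜) (fun z => ⟪f, T z g⟫_𝕜)
      (𝓝[D ×ˢ D] (f, g)) := by
    rw [Metric.tendstoUniformly_iff]
    intro ε hε
    have hb0 : Tendsto b (𝓝 (f, g)) (𝓝 0) := by
      simpa [b] using (show Continuous b by fun_prop).tendsto (f, g)
    filter_upwards [nhdsWithin_le_nhds (hb0.eventually_lt_const hε)] with q hq z
    exact (hb q z).trans_lt hq
  have hne : (𝓝[D ×ˢ D] (f, g)).NeBot := mem_closure_iff_nhdsWithin_neBot.1 ((hD.prod hD) (f, g))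
  refine hunif.tendsto_of_eventually_tendsto ?_ tendsto_const_nhds
  filter_upwards [self_mem_nhdsWithin] with q hq using h q.1 hq.1 q.2 hq.2

theorem MeasureTheory.Lp.dense_setOf_ae_eq_zero_of_lt_abs {E : Type*} [NormedAddCommGroup E]
    [NormedSpace ℝ E] {p : ℝ≥0∞} [Fact (1 ≤ p)] (hp : p ≠ ∞) :
    Dense {f : Lp E p (volume : Measure ℝ) | ∃ R, ∀ᵐ s, R < |s| → f s = 0} := by
  intro f
  refine (mem_closure_iff_nhds_basis Metric.nhds_basis_closedEBall).2 fun ε hε => ?_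
  obtain ⟨g, hg_supp, hfg, -, hg⟩ := (Lp.memLp f).exists_hasCompactSupport_eLpNorm_sub_le hp hε.ne'
  refine ⟨hg.toLp g, ?_, ?_⟩
  · obtain ⟨R, hR⟩ := hg_supp.isBounded.subset_closedBall 0
    refine ⟨R, ?_⟩
    filter_upwards [hg.coeFn_toLp] with s hs hRs
    rw [hs]
    refine image_eq_zero_of_notMem_tsupport fun h => ?_
    have := hR h
    rw [Metric.mem_closedBall, Real.dist_eq, sub_zero] at this
    linarith
  · rwa [Metric.mem_closedEBall', ← Lp.toLp_coeFn f (Lp.memLp f), Lp.edist_toLp_toLp]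

theorem WeylSystem.W_eq_smul_mul (S : WeylSystem H) (x y : ℝ) :
    S.W (x, y) = Complex.exp (Complex.I * ((x * y / 2 : ℝ) : ℂ)) • (S.W (x, 0) * S.W (0, y)) := by
  have h : Complex.I * ((x * y / 2 : ℝ) : ℂ) + Complex.I * (symp (x, 0) (0, y) : ℂ) = 0 := by
    simp only [symp]
    push_cast
    ring
  rw [S.weyl, smul_smul, ← Complex.exp_add, h, Complex.exp_zero, one_smul, Prod.mk_add_mk,
    add_zero, zero_add]

theorem WeylSystem.norm_inner_W (S : WeylSystem H) (f g : H) (x y : ℝ) :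
    ‖⟪f, S.W (x, y) g⟫_ℂ‖ = ‖⟪star (S.W (x, 0)) f, S.W (0, y) g⟫_ℂ‖ := by
  rw [S.W_eq_smul_mul, smul_apply, inner_smul_right, norm_mul,
    mul_comm Complex.I, Complex.norm_exp_ofReal_mul_I, one_mul, ContinuousLinearMap.star_eq_adjoint,
    ContinuousLinearMap.adjoint_inner_left, mul_apply_eq_comp]

local notation "L²" => Lp ℂ 2 (volume : Measure ℝ)

def WeylSystem.IsSchrodinger (S : WeylSystem L²) : Prop :=
  ∀ (x y : ℝ) (f : L²),
    ⇑((S.W (x, y)) f) =ᵐ[volume] fun s : ℝ => Complex.exp (Complex.I * ((x * y / 2 : ℝ) : ℂ)) *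
      (Complex.exp (Complex.I * ((x * s : ℝ) : ℂ)) * f (s + y))

theorem WeylSystem.IsSchrodinger.tendsto_inner_W_fst {S : WeylSystem L²} (hS : S.IsSchrodinger)
    (f g : L²) : Tendsto (fun x : ℝ => ⟪f, S.W (x, 0) g⟫_ℂ) (cocompact ℝ) (𝓝 0) := by
  have hscale : Tendsto (fun x : ℝ => x * -(2 * Real.pi)⁻¹) (cocompact ℝ) (cocompact ℝ) :=
    tendsto_cocompact_mul_right₀ (by simp [Real.pi_ne_zero])
  refine ((Real.tendsto_integral_exp_smul_cocompact
    fun s => starRingEnd ℂ (f s) * g s).comp hscale).congr fun x => ?_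
  rw [L2.inner_def]
  refine integral_congr_ae ?_
  filter_upwards [hS x 0 g] with s hs
  rw [hs]
  have harg : 2 * Real.pi * -(s * (x * -(2 * Real.pi)⁻¹)) = x * s := by field_simp
  simp only [Circle.smul_def, Real.fourierChar_apply, smul_eq_mul, harg, RCLike.inner_apply,
    mul_zero, zero_div, Complex.ofReal_zero, add_zero, Complex.exp_zero, one_mul]
  ring_nf

theorem WeylSystem.IsSchrodinger.inner_W_eq_zero {S : WeylSystem L²} (hS : S.IsSchrodinger)
    {f g : L²} {R₁ R₂ : ℝ} (hf : ∀ᵐ s, R₁ < |s| → f s = 0) (hg : ∀ᵐ s, R₂ < |s| → g s = 0)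
    (x : ℝ) {y : ℝ} (hy : R₁ + R₂ < |y|) : ⟪f, S.W (x, y) g⟫_ℂ = 0 := by
  rw [L2.inner_def]
  refine integral_eq_zero_of_ae ?_
  have hg' : ∀ᵐ s, R₂ < |s + y| → g (s + y) = 0 :=
    (measurePreserving_add_right volume y).quasiMeasurePreserving.ae hg
  filter_upwards [hf, hS x y g, hg'] with s hfs hWs hgs
  rcases lt_or_ge R₁ |s| with hs | hs
  · simp [hfs hs]
  · have : R₂ < |s + y| := by
      have := abs_sub (s + y) s
      rw [add_sub_cancel_left] at this
      linarith
    simp [hWs, hgs this]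

theorem WeylSystem.IsSchrodinger.tendsto_inner_W_of_ae_eq_zero {S : WeylSystem L²}
    (hS : S.IsSchrodinger) {f g : L²} {R₁ R₂ : ℝ} (hf : ∀ᵐ s, R₁ < |s| → f s = 0)
    (hg : ∀ᵐ s, R₂ < |s| → g s = 0) :
    Tendsto (fun z => ⟪f, S.W z g⟫_ℂ) (cocompact (ℝ × ℝ)) (𝓝 0) := by
  set F : ℝ → ℝ → ℂ := fun x y => ⟪star (S.W (x, 0)) f, S.W (0, y) g⟫_ℂ
  have hF : Tendsto (Function.uncurry F) (cocompact (ℝ × ℝ)) (𝓝 0) := by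
    refine tendsto_cocompact_prod_of_equicontinuousOn (K := Metric.closedBall 0 (R₁ + R₂))
      (isCompact_closedBall 0 _) ?_ (fun y _ => ?_) fun x y hy => ?_
    · refine (equicontinuous_inner_of_norm_le (C := ‖f‖₊) (fun x => ?_) ?_).equicontinuousOn _
      · exact (ContinuousLinearMap.norm_map_of_mem_unitary
          (Unitary.star_mem (S.unitary_mem _)) f).le
      · exact (S.strong_cont g).comp (by fun_prop)
    · simpa [F, ContinuousLinearMap.star_eq_adjoint, ContinuousLinearMap.adjoint_inner_left]
        using hS.tendsto_inner_W_fst f (S.W (0, y) g)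
    · rw [← norm_eq_zero, ← S.norm_inner_W]
      exact norm_eq_zero.2 (hS.inner_W_eq_zero hf hg x (by simpa using hy))
  rw [tendsto_zero_iff_norm_tendsto_zero] at hF ⊢
  exact hF.congr fun z => (S.norm_inner_W f g z.1 z.2).symm

theorem WeylSystem.IsSchrodinger.tendsto_inner_W {S : WeylSystem L²} (hS : S.IsSchrodinger)
    (f g : L²) : Tendsto (fun z => ⟪f, S.W z g⟫_ℂ) (cocompact (ℝ × ℝ)) (𝓝 0) := by
  refine tendsto_inner_apply_of_dense (C := 1) (fun z => ?_)
    (Lp.dense_setOf_ae_eq_zero_of_lt_abs (p := 2) ENNReal.ofNat_ne_top) ?_ f g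
  · exact (S.W z).opNorm_le_bound zero_le_one fun v => by
      rw [ContinuousLinearMap.norm_map_of_mem_unitary (S.unitary_mem z), one_mul]
  · rintro f ⟨R₁, hf⟩ g ⟨R₂, hg⟩
    exact hS.tendsto_inner_W_of_ae_eq_zero hf hg

theorem ccr_riemann_lebesgue_general
    (S : WeylSystem (Lp ℂ 2 (volume : Measure ℝ)))
    (hW : ∀ (x y : ℝ) (f : Lp ℂ 2 (volume : Measure ℝ)),
      ⇑((S.W (x, y)) f) =ᵐ[volume] fun s : ℝ => Complex.exp (Complex.I * ((x * y / 2 : ℝ) : ℂ)) *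
        (Complex.exp (Complex.I * ((x * s : ℝ) : ℂ)) * f (s + y)))
    (ξ η : ℕ → Lp ℂ 2 (volume : Measure ℝ))
    (hsum : Summable fun n => ‖ξ n‖ * ‖η n‖) :
    Tendsto (fun z : ℝ × ℝ => ∑' n, @inner ℂ _ _ (ξ n) ((S.W z) (η n)))
      (cocompact (ℝ × ℝ)) (nhds 0) := by
  have hbound : ∀ z n, ‖⟪ξ n, S.W z (η n)⟫_ℂ‖ ≤ ‖ξ n‖ * ‖η n‖ := fun z n =>
    (norm_inner_le_norm _ _).trans_eq
      (by rw [ContinuousLinearMap.norm_map_of_mem_unitary (S.unitary_mem z)])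
  simpa using tendsto_tsum_of_dominated_convergence hsum
    (fun n => WeylSystem.IsSchrodinger.tendsto_inner_W (S := S) hW (ξ n) (η n))
    (Eventually.of_forall hbound)

/-- Riemann–Lebesgue lemma for the CCR transform: for every trace-class operator
`A` on `L²(ℝ)` (given by a nuclear representation `A x = ∑' n, ⟨ξ n, x⟩ • η n` with
`∑ ‖ξ n‖ * ‖η n‖ < ∞`, so that `Â(z) = trace (A W_z) = ∑' n, ⟨ξ n, W_z (η n)⟩`), the function
`Â(z)` tends to `0` as `|z| → ∞`. -/
theorem ccr_riemann_lebesgue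
    (S : WeylSystem (Lp ℂ 2 (volume : Measure ℝ)))
    (hW : ∀ (x y : ℝ) (f : Lp ℂ 2 (volume : Measure ℝ)),
      ⇑((S.W (x, y)) f) =ᵐ[volume] fun s : ℝ => Complex.exp (Complex.I * ((x * y / 2 : ℝ) : ℂ)) *
        (Complex.exp (Complex.I * ((x * s : ℝ) : ℂ)) * f (s + y)))
    (ξ η : ℕ → Lp ℂ 2 (volume : Measure ℝ))
    (hsum : Summable fun n => ‖ξ n‖ * ‖η n‖)
    (A : Lp ℂ 2 (volume : Measure ℝ) →L[ℂ] Lp ℂ 2 (volume : Measure ℝ))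
    (hA : ∀ x, A x = ∑' n, @inner ℂ _ _ (ξ n) x • η n) :
    Tendsto (fun z : ℝ × ℝ => ∑' n, @inner ℂ _ _ (ξ n) ((S.W z) (η n)))
      (cocompact (ℝ × ℝ)) (nhds 0) :=
  ccr_riemann_lebesgue_general S hW ξ η hsum
end
end

section
/- If a CP semigroup φ on B(K) is pure and has no normal invariant state, then its minimal dilation α to an E₀-semigroup on B(H) (with K ⊆ H, P the projection onto K, φ_t(PXP) compressing α, and α_t(P) ↑ 1) has no normal invariant state. -/
open MeasureTheory Complex Filter
open scoped ComplexOrder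

noncomputable section

variable (H : Type) [NormedAddCommGroup H] [InnerProductSpace ℂ H] [CompleteSpace H]

variable {H}

/-- An `E₀`-semigroup on `B(H)`: a pointwise weak-continuous semigroup of unital normal
`*`-endomorphisms of `B(H)` (normality expressed by preservation of normal functionals under
precomposition). -/
structure E0Semigroup (H : Type) [NormedAddCommGroup H] [InnerProductSpace ℂ H]
    [CompleteSpace H] where
  α : ℝ → (H →L[ℂ] H) → (H →L[ℂ] H)
  map_add : ∀ t, 0 ≤ t → ∀ A B : H →L[ℂ] H, α t (A + B) = α t A + α t B
  map_smul : ∀ t, 0 ≤ t → ∀ (c : ℂ) (A : H →L[ℂ] H), α t (c • A) = c • α t A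
  map_mul : ∀ t, 0 ≤ t → ∀ A B : H →L[ℂ] H, α t (A * B) = α t A * α t B
  map_star : ∀ t, 0 ≤ t → ∀ A : H →L[ℂ] H, α t (star A) = star (α t A)
  map_one : ∀ t, 0 ≤ t → α t 1 = 1
  normal : ∀ t, 0 ≤ t → ∀ ρ : (H →L[ℂ] H) → ℂ, IsNormalFunctional ρ →
    IsNormalFunctional (fun A => ρ (α t A))
  semigroup : ∀ s t, 0 ≤ s → 0 ≤ t → ∀ A : H →L[ℂ] H, α s (α t A) = α (s + t) A
  map_zero : α 0 = id
  weak_cont : ∀ (A : H →L[ℂ] H) (ξ η : H), Continuous fun t : ℝ => @inner ℂ _ _ ((α t A) ξ) η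

/-!
An invariant normal state `ω` of `α` satisfies `ω(P) = ω(α_t(P)) → ω(1) = 1`, by dominated
convergence in the trace-class representation of `ω` (the projections `α_t(P)` are contractions
converging strongly to `1`). A state with `ω(P) = 1` annihilates `(1 - P) B` and `B (1 - P)` by
the Cauchy–Schwarz inequality, so it is determined by its compression, `ω(B) = ω(PBP)`. Hence the
compression of `ω` is a normal invariant state of `φ_t = P α_t(P · P) P`, which does not exist.
-/

open scoped InnerProductSpace Topology

lemma Complex.eq_zero_of_forall_nonneg_mul_add_sq_mul {a b : ℂ} (hb : 0 ≤ b)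
    (h : ∀ t : ℝ, 0 ≤ t * a + t ^ 2 * b) : a = 0 := by
  obtain ⟨hb_re, hb_im⟩ := Complex.nonneg_iff.mp hb
  have h_im : a.im = 0 := by
    simpa [hb_im] using (Complex.nonneg_iff.mp (h 1)).2.symm
  have h_re : a.re = 0 := by
    by_contra ha
    -- at `t = -a/(b + 1)` the real part equals `-a² / (b + 1)² < 0`
    have key := (Complex.nonneg_iff.mp (h (-a.re / (b.re + 1)))).1
    simp only [Complex.add_re, Complex.re_ofReal_mul, ← Complex.ofReal_pow] at key
    have hb1 : 0 < b.re + 1 := by linarith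
    field_simp at key
    nlinarith [mul_pos (pow_pos (abs_pos.mpr ha) 2) hb1, sq_abs a.re]
  exact Complex.ext h_re h_im

section NormalFunctional

variable {H : Type} [NormedAddCommGroup H] [InnerProductSpace ℂ H]

namespace IsNormalFunctional

variable {ω : (H →L[ℂ] H) → ℂ}

lemma summable_inner {ξ η : ℕ → H} (h : Summable fun n => ‖ξ n‖ * ‖η n‖) (A : H →L[ℂ] H) :
    Summable fun n => ⟪A (ξ n), η n⟫_ℂ :=
  Summable.of_norm_bounded (h.mul_left ‖A‖) fun n =>
    (norm_inner_le_norm _ _).trans <| by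
      rw [← mul_assoc]; gcongr; exact A.le_opNorm _

lemma map_add (hω : IsNormalFunctional ω) (A B : H →L[ℂ] H) : ω (A + B) = ω A + ω B := by
  obtain ⟨ξ, η, hsum, hrep⟩ := hω
  rw [hrep, hrep, hrep, ← (summable_inner hsum A).tsum_add (summable_inner hsum B)]
  simp only [add_apply, inner_add_left]

/-- Normal functionals are conjugate-linear, since `⟪·, ·⟫_ℂ` is conjugate-linear on the left. -/
lemma map_smul (hω : IsNormalFunctional ω) (c : ℂ) (A : H →L[ℂ] H) :
    ω (c • A) = (starRingEnd ℂ) c * ω A := by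
  obtain ⟨ξ, η, hsum, hrep⟩ := hω
  rw [hrep, hrep, ← tsum_mul_left]
  simp only [smul_apply, inner_smul_left]

lemma map_sub (hω : IsNormalFunctional ω) (A B : H →L[ℂ] H) : ω (A - B) = ω A - ω B := by
  have h := hω.map_add (A - B) B
  rw [sub_add_cancel] at h
  exact eq_sub_of_add_eq h.symm

lemma tendsto_of_tendsto_apply (hω : IsNormalFunctional ω) {ι : Type*} {l : Filter ι}
    {A : ι → H →L[ℂ] H} {B : H →L[ℂ] H} {C : ℝ}
    (hconv : ∀ ξ, Tendsto (fun i => A i ξ) l (𝓝 (B ξ))) (hbound : ∀ᶠ i in l, ‖A i‖ ≤ C) :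
    Tendsto (fun i => ω (A i)) l (𝓝 (ω B)) := by
  obtain ⟨ξ, η, hsum, hrep⟩ := hω
  simp only [hrep]
  refine tendsto_tsum_of_dominated_convergence (hsum.mul_left C)
    (fun k => (hconv (ξ k)).inner tendsto_const_nhds) ?_
  filter_upwards [hbound] with i hi k
  calc ‖⟪A i (ξ k), η k⟫_ℂ‖ ≤ ‖A i‖ * ‖ξ k‖ * ‖η k‖ :=
        (norm_inner_le_norm _ _).trans (by gcongr; exact (A i).le_opNorm _)
    _ ≤ C * (‖ξ k‖ * ‖η k‖) := by rw [← mul_assoc]; gcongr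

end IsNormalFunctional

end NormalFunctional

namespace IsNormalFunctional

variable {ω : (H →L[ℂ] H) → ℂ}

lemma map_star_add_smul_mul_add_smul (hω : IsNormalFunctional ω) (Q A : H →L[ℂ] H) (c : ℂ) :
    ω (star (Q + c • A) * (Q + c • A)) = ω (star Q * Q) + (starRingEnd ℂ) c * ω (star Q * A)
      + c * ω (star A * Q) + c * (starRingEnd ℂ) c * ω (star A * A) := by
  have hexp : star (Q + c • A) * (Q + c • A) = star Q * Q + c • (star Q * A)
      + (starRingEnd ℂ) c • (star A * Q) + ((starRingEnd ℂ) c * c) • (star A * A) := by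
    simp only [star_add, star_smul, add_mul, mul_add, smul_mul_assoc, mul_smul_comm, smul_smul,
      smul_add, RCLike.star_def, mul_comm]
    abel
  simp only [hexp, hω.map_add, hω.map_smul, map_mul, Complex.conj_conj]

/-- Cauchy–Schwarz for the positive sesquilinear form `(X, Y) ↦ ω(X* Y)`: expanding
`ω((Q + cA)* (Q + cA)) ≥ 0` for real and imaginary `c` forces both cross terms to vanish. -/
lemma map_star_mul_eq_zero_of_map_star_mul_self_eq_zero (hω : IsNormalFunctional ω)
    (hpos : ∀ A : H →L[ℂ] H, 0 ≤ ω (star A * A)) {Q : H →L[ℂ] H} (hQ : ω (star Q * Q) = 0)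
    (A : H →L[ℂ] H) : ω (star Q * A) = 0 ∧ ω (star A * Q) = 0 := by
  have hsum : ω (star Q * A) + ω (star A * Q) = 0 := by
    refine Complex.eq_zero_of_forall_nonneg_mul_add_sq_mul (hpos A) fun t => ?_
    have h := hpos (Q + (t : ℂ) • A)
    rw [hω.map_star_add_smul_mul_add_smul, hQ, Complex.conj_ofReal] at h
    convert h using 1; ring
  have hdiff : Complex.I * (ω (star A * Q) - ω (star Q * A)) = 0 := by
    refine Complex.eq_zero_of_forall_nonneg_mul_add_sq_mul (hpos A) fun t => ?_
    have h := hpos (Q + ((t : ℂ) * Complex.I) • A)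
    rw [hω.map_star_add_smul_mul_add_smul, hQ, map_mul, Complex.conj_ofReal,
      Complex.conj_I] at h
    convert h using 1; ring_nf; rw [Complex.I_sq]; ring
  have hdiff' : ω (star A * Q) - ω (star Q * A) = 0 :=
    (mul_eq_zero.mp hdiff).resolve_left Complex.I_ne_zero
  exact ⟨by linear_combination (hsum - hdiff') / 2, by linear_combination (hsum + hdiff') / 2⟩

end IsNormalFunctional

lemma IsNormalState.map_mul_mul_eq_of_map_eq_one {ω : (H →L[ℂ] H) → ℂ} (hω : IsNormalState ω)
    {P : H →L[ℂ] H} (hP : IsStarProjection P) (hωP : ω P = 1) (B : H →L[ℂ] H) :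
    ω (P * B * P) = ω B := by
  obtain ⟨hnf, hpos, hone⟩ := hω
  have hQ : IsStarProjection (1 - P) := hP.one_sub
  have hωQ : ω (star (1 - P) * (1 - P)) = 0 := by
    rw [hQ.isSelfAdjoint.star_eq, hQ.isIdempotentElem.eq, hnf.map_sub, hone, hωP, sub_self]
  have hvanish := hnf.map_star_mul_eq_zero_of_map_star_mul_self_eq_zero hpos hωQ
  rw [hQ.isSelfAdjoint.star_eq] at hvanish
  have hleft : ω ((1 - P) * B) = 0 := (hvanish B).1
  have hright : ω (P * B * (1 - P)) = 0 := by
    simpa [star_mul, hP.isSelfAdjoint.star_eq, mul_assoc] using (hvanish (star (P * B))).2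
  calc ω (P * B * P) = ω (P * B * P) + ω (P * B * (1 - P)) + ω ((1 - P) * B) := by
        rw [hleft, hright, add_zero, add_zero]
    _ = ω B := by
        rw [← hnf.map_add, ← hnf.map_add]; congr 1; noncomm_ring

lemma E0Semigroup.isStarProjection_apply (α : E0Semigroup H) {t : ℝ} (ht : 0 ≤ t)
    {P : H →L[ℂ] H} (hP : IsStarProjection P) : IsStarProjection (α.α t P) where
  isIdempotentElem := by
    rw [IsIdempotentElem, ← α.map_mul t ht, hP.isIdempotentElem.eq]
  isSelfAdjoint := by
    rw [IsSelfAdjoint, ← α.map_star t ht, hP.isSelfAdjoint.star_eq]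

lemma E0Semigroup.map_eq_one_of_invariant (α : E0Semigroup H) {P : H →L[ℂ] H}
    (hP : IsStarProjection P) (hmin : ∀ ξ : H, Tendsto (fun t : ℝ => (α.α t P) ξ) atTop (𝓝 ξ))
    {ω : (H →L[ℂ] H) → ℂ} (hω : IsNormalFunctional ω) (hone : ω 1 = 1)
    (hinv : ∀ t : ℝ, 0 ≤ t → ∀ A : H →L[ℂ] H, ω (α.α t A) = ω A) : ω P = 1 := by
  have hlim : Tendsto (fun t : ℝ => ω (α.α t P)) atTop (𝓝 (ω 1)) :=
    hω.tendsto_of_tendsto_apply hmin <| (eventually_ge_atTop 0).mono fun t ht =>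
      (α.isStarProjection_apply ht hP).norm_le
  have hconst : (fun t : ℝ => ω (α.α t P)) =ᶠ[atTop] fun _ => ω P :=
    (eventually_ge_atTop 0).mono fun t ht => hinv t ht P
  rw [← hone]
  exact tendsto_nhds_unique (tendsto_const_nhds.congr' hconst.symm) hlim

theorem minimal_dilation_no_normal_invariant_state_general
    (α : E0Semigroup H) (P : H →L[ℂ] H) (hP : IsIdempotentElem P) (hPsa : star P = P)
    (hmin : ∀ ξ : H, Tendsto (fun t : ℝ => (α.α t P) ξ) atTop (nhds ξ))
    (hnoinv : ¬ ∃ ρ : (H →L[ℂ] H) → ℂ, IsNormalState ρ ∧ ρ P = 1 ∧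
      ∀ t : ℝ, 0 ≤ t → ∀ A : H →L[ℂ] H, ρ (P * α.α t (P * A * P) * P) = ρ (P * A * P)) :
    ¬ ∃ ω : (H →L[ℂ] H) → ℂ, IsNormalState ω ∧
      ∀ t : ℝ, 0 ≤ t → ∀ A : H →L[ℂ] H, ω (α.α t A) = ω A := by
  rintro ⟨ω, hω, hinv⟩
  have hPproj : IsStarProjection P := ⟨hP, hPsa⟩
  have hωP : ω P = 1 := α.map_eq_one_of_invariant hPproj hmin hω.1 hω.2.2 hinv
  exact hnoinv ⟨ω, hω, hωP, fun t ht A => by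
    rw [hω.map_mul_mul_eq_of_map_eq_one hPproj hωP, hinv t ht]⟩

/-- If a CP semigroup `φ` on `B(K)` is pure and has no normal invariant state,
then its minimal dilation `α` to an `E₀`-semigroup on `B(H)` has no normal invariant state.
Here `K` is the range of a projection `P`, `φ_t(A) = P α_t(A) P` on the corner
`B(K) = P B(H) P`, normal states of `B(K)` are identified with normal states `ρ` of `B(H)`
with `ρ(P) = 1`, and minimality gives `α_t(P) ↑ 1` strongly. -/
theorem minimal_dilation_no_normal_invariant_state [TopologicalSpace.SeparableSpace H]
    (α : E0Semigroup H) (P : H →L[ℂ] H) (hP : IsIdempotentElem P) (hPsa : star P = P)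
    (hmin : ∀ ξ : H, Tendsto (fun t : ℝ => (α.α t P) ξ) atTop (nhds ξ))
    (hpure : ∀ ρ₁ ρ₂ : (H →L[ℂ] H) → ℂ, IsNormalState ρ₁ → IsNormalState ρ₂ →
      ρ₁ P = 1 → ρ₂ P = 1 →
      Tendsto (fun t : ℝ => funcNorm (fun A =>
        ρ₁ (P * α.α t (P * A * P) * P) - ρ₂ (P * α.α t (P * A * P) * P))) atTop (nhds 0))
    (hnoinv : ¬ ∃ ρ : (H →L[ℂ] H) → ℂ, IsNormalState ρ ∧ ρ P = 1 ∧
      ∀ t : ℝ, 0 ≤ t → ∀ A : H →L[ℂ] H, ρ (P * α.α t (P * A * P) * P) = ρ (P * A * P)) :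
    ¬ ∃ ω : (H →L[ℂ] H) → ℂ, IsNormalState ω ∧
      ∀ t : ℝ, 0 ≤ t → ∀ A : H →L[ℂ] H, ω (α.α t A) = ω A :=
  minimal_dilation_no_normal_invariant_state_general α P hP hPsa hmin hnoinv
end
end
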